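/- For any pair (a, x) of coprime integers with 1 < a ≤ x and x = ca + r (0 < r < a), deg (a - r, r)_q = deg (a, x)_q − ⌈x/a⌉. -/

import Mathlib

open Polynomial

/-- The `q`-integer `[c]_q = 1 + q + ⋯ + q^{c-1}` as a polynomial in `ℤ[q]`. -/
noncomputable def qInt (c : ℕ) : Polynomial ℤ := ∑ i ∈ Finset.range c, X ^ i

/-- The polynomial `(a, b)_q ∈ ℤ[q]` associated to a pair of coprime positive
integers: `(1, n)_q = (n, 1)_q = [n+1]_q`; if `a < b` then
`(a,b)_q = (a-r, r)_q + q·(a, b-a)_q` with `r = b % a`; if `a > b` then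
`(a,b)_q = (a-b, b)_q + q^⌈a/b⌉·(r, b-r)_q` with `r = a % b`.
(Values on non-coprime or zero inputs are junk.) -/
noncomputable def W : ℕ → ℕ → Polynomial ℤ
  | 1, b => qInt (b + 1)
  | a, 1 => qInt (a + 1)
  | 0, _ => 0
  | _, 0 => 0
  | a + 2, b + 2 =>
    if a < b then
      W (a + 2 - (b + 2) % (a + 2)) ((b + 2) % (a + 2)) + X * W (a + 2) (b - a)
    else
      W (a - b) (b + 2) +
        X ^ ((a + 2 + (b + 2) - 1) / (b + 2)) *
          W ((a + 2) % (b + 2)) (b + 2 - (a + 2) % (b + 2))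
  termination_by a b => a + b
  decreasing_by
  · have := Nat.mod_lt (b + 2) (show 0 < a + 2 by omega); omega
  · omega
  · omega
  · have := Nat.mod_lt (a + 2) (show 0 < b + 2 by omega); omega

/-- The sequence of digits of the negative continued fraction expansion
`x/a = [c₁, …, c_l]⁻` (each `cᵢ = ⌈·⌉` of the current fraction). By convention
`ncfDigits x 0 = []` (for `1/0 = ∞`) and `ncfDigits x 1 = [x]`. -/
def ncfDigits : ℕ → ℕ → List ℕ
  | _, 0 => []
  | x, 1 => [x]
  | x, a + 2 =>
      (x + (a + 2) - 1) / (a + 2) ::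
        ncfDigits (a + 2) ((x + (a + 2) - 1) / (a + 2) * (a + 2) - x)
  termination_by x a => a
  decreasing_by
    have := Nat.div_mul_le_self (x + (a + 2) - 1) (a + 2); omega

/-- The (coprime) numerator and denominator of the Morier-Genoud–Ovsienko
`q`-deformation of the negative continued fraction `[c₁, …, c_l]⁻`, computed by
the continuant recursion `(N, D) ↦ ([c]_q·N - q^{c-1}·D, N)`, with `(1, 0)` for
the empty list. -/
noncomputable def qCF : List ℕ → Polynomial ℤ × Polynomial ℤ
  | [] => (1, 0)
  | c :: rest =>
      let p := qCF rest
      (qInt c * p.1 - X ^ (c - 1) * p.2, p.1)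

/-- Numerator `N_q(x/a)` of the Morier-Genoud–Ovsienko `q`-rational `[x/a]_q`. -/
noncomputable def Nq (x a : ℕ) : Polynomial ℤ := (qCF (ncfDigits x a)).1

/-- Denominator `D_q(x/a)` of the Morier-Genoud–Ovsienko `q`-rational `[x/a]_q`. -/
noncomputable def Dq (x a : ℕ) : Polynomial ℤ := (qCF (ncfDigits x a)).2

/-- The normalized Jones polynomial `J_{x/a}(q) = q·N_q(x/a) + (1-q)·D_q(x/a)`. -/
noncomputable def Jq (x a : ℕ) : Polynomial ℤ := X * Nq x a + (1 - X) * Dq x a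

/-!
The degree of `(a, b)_q` is the sum `quotSum a b` of the partial quotients of the continued
fraction of `b/a`. Every `(a, b)_q` has nonnegative coefficients, so in both branches of the
recursion the degree of the sum is the larger of the two degrees, and `quotSum` satisfies the same
two degree recursions. The theorem then reads `quotSum (a - r) r + ⌈x/a⌉ = quotSum a x`, which
holds because `quotSum a x = ⌊x/a⌋ + quotSum r a` and
`quotSum r a = quotSum r (a - r) + 1 = quotSum (a - r) r + 1`.
-/

theorem Nat.add_sub_one_div_eq_div_add_one {x a : ℕ} (ha : 0 < a) (h : 0 < x % a) :
    (x + a - 1) / a = x / a + 1 := by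
  have hlt : a - 1 < a := Nat.sub_lt ha one_pos
  rw [Nat.add_sub_assoc ha, Nat.add_div ha, Nat.div_eq_of_lt hlt, Nat.mod_eq_of_lt hlt,
    if_pos (by omega), add_zero]

theorem Nat.Coprime.mod_pos {a b : ℕ} (h : a.Coprime b) (ha : 1 < a) : 0 < b % a :=
  Nat.pos_of_ne_zero fun h0 => ha.ne' (h.eq_one_of_dvd (Nat.dvd_of_mod_eq_zero h0))

theorem Nat.Coprime.sub_mod_mod {a b : ℕ} (h : a.Coprime b) (ha : 0 < a) :
    (a - b % a).Coprime (b % a) :=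
  (Nat.coprime_sub_self_left (Nat.mod_lt b ha).le).2
    (Nat.Coprime.symm ((Nat.gcd_rec a b).symm.trans h))

/-- The sum of the partial quotients of the continued fraction of `b / a`, i.e. of the quotients
`⌊b/a⌋, ⌊a/r⌋, …` of the Euclidean algorithm on `(b, a)`. -/
def quotSum : ℕ → ℕ → ℕ
  | 0, _ => 0
  | a + 1, b => b / (a + 1) + quotSum (b % (a + 1)) (a + 1)
  termination_by a => a
  decreasing_by exact Nat.mod_lt _ a.succ_pos

namespace quotSum

theorem zero_left (b : ℕ) : quotSum 0 b = 0 := by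
  rw [quotSum]

theorem of_pos {a : ℕ} (b : ℕ) (ha : 0 < a) : quotSum a b = b / a + quotSum (b % a) a := by
  obtain ⟨a, rfl⟩ := Nat.exists_eq_add_one_of_ne_zero ha.ne'
  rw [quotSum]

theorem one_left (b : ℕ) : quotSum 1 b = b := by
  rw [of_pos b one_pos, Nat.div_one, Nat.mod_one, zero_left, add_zero]

theorem comm (a b : ℕ) : quotSum a b = quotSum b a := by
  wlog hab : a < b generalizing a b
  · rcases (not_lt.1 hab).eq_or_lt with h | h
    · rw [h]
    · exact (this b a h).symm
  rw [of_pos a (by omega), Nat.div_eq_of_lt hab, Nat.mod_eq_of_lt hab, zero_add]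

theorem sub_self_right {a b : ℕ} (ha : 0 < a) (hab : a ≤ b) :
    quotSum a (b - a) + 1 = quotSum a b := by
  obtain ⟨c, rfl⟩ := Nat.exists_eq_add_of_le' hab
  rw [Nat.add_sub_cancel, of_pos _ ha, of_pos _ ha, Nat.add_div_right c ha, Nat.add_mod_right]
  ring

theorem sub_mod_add_div {a b : ℕ} (ha : 0 < a) (hr : 0 < b % a) :
    quotSum (a - b % a) (b % a) + (b / a + 1) = quotSum a b := by
  rw [of_pos b ha, comm (a - b % a), ← sub_self_right hr (Nat.mod_lt b ha).le]
  ring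

end quotSum

namespace Polynomial

variable {R : Type*} [Semiring R] [PartialOrder R] {p q : R[X]}

theorem coeff_X_pow_mul_nonneg (hq : ∀ k, 0 ≤ q.coeff k) (c k : ℕ) :
    0 ≤ (X ^ c * q).coeff k := by
  rw [coeff_X_pow_mul']
  split_ifs
  exacts [hq _, le_rfl]

theorem natDegree_add_of_coeff_nonneg [IsOrderedAddMonoid R] (hp : ∀ k, 0 ≤ p.coeff k)
    (hq : ∀ k, 0 ≤ q.coeff k) : (p + q).natDegree = max p.natDegree q.natDegree := by
  wlog h : p.natDegree ≤ q.natDegree generalizing p q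
  · rw [add_comm, max_comm]
    exact this hq hp (le_of_not_ge h)
  rw [max_eq_right h]
  refine le_antisymm ((natDegree_add_le p q).trans (max_eq_right h).le) ?_
  rcases eq_or_ne q 0 with rfl | hq0
  · exact natDegree_zero.le.trans (Nat.zero_le _)
  refine le_natDegree_of_ne_zero fun h0 => ?_
  rw [coeff_add, add_eq_zero_iff_of_nonneg (hp _) (hq _)] at h0
  exact leadingCoeff_ne_zero.2 hq0 h0.2

theorem natDegree_add_X_pow_mul_of_coeff_nonneg [IsOrderedAddMonoid R] [Nontrivial R]
    (hp : ∀ k, 0 ≤ p.coeff k) (hq : ∀ k, 0 ≤ q.coeff k) (hq0 : q ≠ 0) (c : ℕ) :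
    (p + X ^ c * q).natDegree = max p.natDegree (q.natDegree + c) := by
  rw [natDegree_add_of_coeff_nonneg hp (coeff_X_pow_mul_nonneg hq c), natDegree_X_pow_mul c hq0]

end Polynomial

theorem qInt_coeff (n k : ℕ) : (qInt n).coeff k = if k < n then 1 else 0 := by
  simp [qInt, coeff_X_pow, Finset.sum_ite_eq]

theorem qInt_coeff_nonneg (n k : ℕ) : 0 ≤ (qInt n).coeff k := by
  rw [qInt_coeff]
  split_ifs <;> norm_num

theorem qInt_natDegree (n : ℕ) : (qInt (n + 1)).natDegree = n := by
  refine le_antisymm (natDegree_le_iff_coeff_eq_zero.2 fun k hk => ?_)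
    (le_natDegree_of_ne_zero ?_)
  · rw [qInt_coeff, if_neg (by omega)]
  · simp [qInt_coeff]

theorem W_one_right (a : ℕ) : W a 1 = qInt (a + 1) := by
  rcases eq_or_ne a 1 with rfl | ha
  exacts [W.eq_1 1, W.eq_2 a ha]

theorem W_of_lt {a b : ℕ} (ha : 2 ≤ a) (hab : a < b) :
    W a b = W (a - b % a) (b % a) + X * W a (b - a) := by
  obtain ⟨a, rfl⟩ := Nat.exists_eq_add_of_le' ha
  obtain ⟨b, rfl⟩ := Nat.exists_eq_add_of_le' (ha.trans hab.le)
  rw [W.eq_5, if_pos (by omega), Nat.add_sub_add_right]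

theorem W_of_gt {a b : ℕ} (hb : 2 ≤ b) (hba : b < a) :
    W a b = W (a - b) b + X ^ ((a + b - 1) / b) * W (a % b) (b - a % b) := by
  obtain ⟨b, rfl⟩ := Nat.exists_eq_add_of_le' hb
  obtain ⟨a, rfl⟩ := Nat.exists_eq_add_of_le' (hb.trans hba.le)
  rw [W.eq_5, if_neg (by omega), Nat.add_sub_add_right]

theorem W_coeff_nonneg (a b k : ℕ) : 0 ≤ (W a b).coeff k := by
  induction a, b using W.induct generalizing k with
  | case1 b => rw [W.eq_1]; exact qInt_coeff_nonneg _ _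
  | case2 a ha => rw [W.eq_2 a ha]; exact qInt_coeff_nonneg _ _
  | case3 b hb => rw [W.eq_3 b hb, coeff_zero]
  | case4 a ha ha' => rw [W.eq_4 a ha ha', coeff_zero]
  | case5 a b hab ih₁ ih₂ =>
    rw [W.eq_5, if_pos hab, coeff_add, ← pow_one X]
    exact add_nonneg (ih₁ k) (coeff_X_pow_mul_nonneg ih₂ 1 k)
  | case6 a b hab ih₁ ih₂ =>
    rw [W.eq_5, if_neg hab, coeff_add]
    exact add_nonneg (ih₁ k) (coeff_X_pow_mul_nonneg ih₂ _ k)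

theorem W_coeff_zero {a b : ℕ} (hco : a.Coprime b) (ha : 0 < a) (hb : 0 < b) :
    (W a b).coeff 0 = 1 := by
  rcases Nat.lt_or_ge a 2 with ha₁ | ha₂
  · obtain rfl : a = 1 := by omega
    simp [W.eq_1, qInt_coeff]
  rcases Nat.lt_or_ge b 2 with hb₁ | hb₂
  · obtain rfl : b = 1 := by omega
    simp [W_one_right, qInt_coeff]
  rcases lt_trichotomy a b with hab | rfl | hba
  · have := Nat.mod_lt b ha
    rw [W_of_lt ha₂ hab, coeff_add, coeff_X_mul_zero, add_zero]
    exact W_coeff_zero (hco.sub_mod_mod ha) (by omega) (hco.mod_pos ha₂)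
  · exact absurd ((Nat.coprime_self a).1 hco) (by omega)
  · rw [W_of_gt hb₂ hba, coeff_add,
      Nat.add_sub_one_div_eq_div_add_one hb (hco.symm.mod_pos hb₂), coeff_X_pow_mul',
      if_neg (Nat.not_succ_le_zero _), add_zero]
    exact W_coeff_zero ((Nat.coprime_sub_self_left hba.le).2 hco) (by omega) hb
termination_by a + b

theorem W_ne_zero {a b : ℕ} (hco : a.Coprime b) (ha : 0 < a) (hb : 0 < b) : W a b ≠ 0 :=
  fun h => by simpa [h] using W_coeff_zero hco ha hb

theorem natDegree_W {a b : ℕ} (hco : a.Coprime b) (ha : 0 < a) (hb : 0 < b) :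
    (W a b).natDegree = quotSum a b := by
  rcases Nat.lt_or_ge a 2 with ha₁ | ha₂
  · obtain rfl : a = 1 := by omega
    rw [W.eq_1, qInt_natDegree, quotSum.one_left]
  rcases Nat.lt_or_ge b 2 with hb₁ | hb₂
  · obtain rfl : b = 1 := by omega
    rw [W_one_right, qInt_natDegree, quotSum.comm, quotSum.one_left]
  rcases lt_trichotomy a b with hab | rfl | hba
  · have hr := hco.mod_pos ha₂
    have := Nat.mod_lt b ha
    have hco₁ := hco.sub_mod_mod ha
    have hco₂ := (Nat.coprime_sub_self_right hab.le).2 hco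
    rw [W_of_lt ha₂ hab, ← pow_one X, natDegree_add_X_pow_mul_of_coeff_nonneg (W_coeff_nonneg _ _)
      (W_coeff_nonneg _ _) (W_ne_zero hco₂ ha (by omega)), natDegree_W hco₁ (by omega) hr,
      natDegree_W hco₂ ha (by omega), quotSum.sub_self_right ha hab.le]
    exact max_eq_right (Nat.le.intro (quotSum.sub_mod_add_div ha hr))
  · exact absurd ((Nat.coprime_self a).1 hco) (by omega)
  · have hr := hco.symm.mod_pos hb₂
    have := Nat.mod_lt a hb
    have hco₁ := (Nat.coprime_sub_self_left hba.le).2 hco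
    have hco₂ := (hco.symm.sub_mod_mod hb).symm
    have h₁ : quotSum (a - b) b + 1 = quotSum a b := by
      rw [quotSum.comm, quotSum.comm a]
      exact quotSum.sub_self_right hb hba.le
    have h₂ : quotSum (a % b) (b - a % b) + (a / b + 1) = quotSum a b := by
      rw [quotSum.comm, quotSum.comm a]
      exact quotSum.sub_mod_add_div hb hr
    rw [W_of_gt hb₂ hba, natDegree_add_X_pow_mul_of_coeff_nonneg (W_coeff_nonneg _ _)
      (W_coeff_nonneg _ _) (W_ne_zero hco₂ hr (by omega)), natDegree_W hco₁ (by omega) hb,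
      natDegree_W hco₂ hr (by omega), Nat.add_sub_one_div_eq_div_add_one hb hr, h₂, ← h₁]
    exact max_eq_right (Nat.le_succ _)
termination_by a + b

theorem W_natDegree_rem_general (a x c r : ℕ) (hco : Nat.Coprime a x)
    (hx : x = c * a + r) (hr0 : 0 < r) (hr : r < a) :
    (W (a - r) r).natDegree + (x + a - 1) / a = (W a x).natDegree := by
  have ha : 0 < a := hr0.trans hr
  have hmod : x % a = r := hx ▸ Nat.mul_add_mod_of_lt hr
  have hco' := hco.sub_mod_mod ha
  rw [hmod] at hco'
  rw [natDegree_W hco' (by omega) hr0, natDegree_W hco ha (by omega),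
    Nat.add_sub_one_div_eq_div_add_one ha (hmod ▸ hr0), ← hmod]
  exact quotSum.sub_mod_add_div ha (hmod ▸ hr0)

/-- For coprime `1 < a ≤ x` with `x = c·a + r`, `0 < r < a`:
`deg (a-r, r)_q = deg (a, x)_q − ⌈x/a⌉` (here `⌈x/a⌉ = (x + a - 1)/a`). -/
theorem W_natDegree_rem (a x c r : ℕ) (hco : Nat.Coprime a x) (ha : 1 < a) (hax : a ≤ x)
    (hx : x = c * a + r) (hr0 : 0 < r) (hr : r < a) :
    (W (a - r) r).natDegree + (x + a - 1) / a = (W a x).natDegree :=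
  W_natDegree_rem_general a x c r hco hx hr0 hr
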